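/- The parametrized curve γ(τ) = (e^{τ sin v} cos(τ cos v), e^{τ sin v} sin(τ cos v) cos u, e^{τ sin v} sin(τ cos v) sin u) is a unit-speed geodesic in S²×R: its speed with respect to the metric (ds)² = ((dx)²+(dy)²+(dz)²)/(x²+y²+z²) is identically 1, and it satisfies the geodesic equations of this metric. -/

import Mathlib

/-!
Writing `w = sin v + i cos v`, the curve is `τ ↦ e^{τ w}` placed in the plane spanned by
`(1, 0, 0)` and `(0, cos u, sin u)`. Hence `γ' = w γ` and `γ'' = w² γ` in that plane, so
`⟨γ, γ'⟩ / |γ|² = Re w`, `|γ'|² / |γ|² = |w|² = 1`, and each coordinate `f` satisfies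
`f'' - 2 (Re w) f' + |w|² f = 0` because `w` and `w̄` are the roots of `X² - 2 (Re w) X + |w|²`.
That second-order equation is exactly the geodesic equation of `δ / |x|²` once the two
quotients are substituted.
-/

open Real

namespace LogSpiral

variable (s c : ℝ)

noncomputable def re (τ : ℝ) : ℝ := exp (τ * s) * cos (τ * c)

noncomputable def im (τ : ℝ) : ℝ := exp (τ * s) * sin (τ * c)

variable {s c}

theorem hasDerivAt_re (τ : ℝ) : HasDerivAt (re s c) (s * re s c τ - c * im s c τ) τ :=
  (((hasDerivAt_mul_const s).exp).mul (hasDerivAt_mul_const c).cos).congr_deriv <| by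
    simp only [re, im]; ring

theorem hasDerivAt_im (τ : ℝ) : HasDerivAt (im s c) (s * im s c τ + c * re s c τ) τ :=
  (((hasDerivAt_mul_const s).exp).mul (hasDerivAt_mul_const c).sin).congr_deriv <| by
    simp only [re, im]; ring

theorem deriv_re : deriv (re s c) = fun τ => s * re s c τ - c * im s c τ :=
  funext fun τ => (hasDerivAt_re τ).deriv

theorem deriv_im : deriv (im s c) = fun τ => s * im s c τ + c * re s c τ :=
  funext fun τ => (hasDerivAt_im τ).deriv

theorem deriv_deriv_re (τ : ℝ) :
    deriv (deriv (re s c)) τ = s * deriv (re s c) τ - c * deriv (im s c) τ := by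
  rw [deriv_re, deriv_im]
  exact (((hasDerivAt_re τ).const_mul s).sub ((hasDerivAt_im τ).const_mul c)).deriv

theorem deriv_deriv_im (τ : ℝ) :
    deriv (deriv (im s c)) τ = s * deriv (im s c) τ + c * deriv (re s c) τ := by
  rw [deriv_re, deriv_im]
  exact (((hasDerivAt_im τ).const_mul s).add ((hasDerivAt_re τ).const_mul c)).deriv

theorem re_sq_add_im_sq (τ : ℝ) : re s c τ ^ 2 + im s c τ ^ 2 = exp (τ * s) ^ 2 := by
  simp only [re, im]
  linear_combination exp (τ * s) ^ 2 * cos_sq_add_sin_sq (τ * c)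

theorem re_mul_deriv_add_im_mul_deriv (τ : ℝ) :
    re s c τ * deriv (re s c) τ + im s c τ * deriv (im s c) τ = s * exp (τ * s) ^ 2 := by
  rw [deriv_re, deriv_im, ← re_sq_add_im_sq]
  ring

theorem deriv_re_sq_add_deriv_im_sq (τ : ℝ) :
    deriv (re s c) τ ^ 2 + deriv (im s c) τ ^ 2 = (s ^ 2 + c ^ 2) * exp (τ * s) ^ 2 := by
  rw [deriv_re, deriv_im, ← re_sq_add_im_sq]
  ring

theorem deriv_deriv_re_sub_add (τ : ℝ) :
    deriv (deriv (re s c)) τ - 2 * s * deriv (re s c) τ + (s ^ 2 + c ^ 2) * re s c τ = 0 := by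
  rw [deriv_deriv_re, deriv_re, deriv_im]
  ring

theorem deriv_deriv_im_sub_add (τ : ℝ) :
    deriv (deriv (im s c)) τ - 2 * s * deriv (im s c) τ + (s ^ 2 + c ^ 2) * im s c τ = 0 := by
  rw [deriv_deriv_im, deriv_re, deriv_im]
  ring

end LogSpiral

open LogSpiral in
theorem s2r_geodesic_unit_speed_and_equations (u v : ℝ)
    (X Y Z : ℝ → ℝ)
    (hX : X = fun τ => Real.exp (τ * Real.sin v) * Real.cos (τ * Real.cos v))
    (hY : Y = fun τ => Real.exp (τ * Real.sin v) * Real.sin (τ * Real.cos v) * Real.cos u)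
    (hZ : Z = fun τ => Real.exp (τ * Real.sin v) * Real.sin (τ * Real.cos v) * Real.sin u) :
    ∀ τ : ℝ,
      -- unit speed: ‖γ'‖²/‖γ‖² = 1
      ((deriv X τ) ^ 2 + (deriv Y τ) ^ 2 + (deriv Z τ) ^ 2) /
        ((X τ) ^ 2 + (Y τ) ^ 2 + (Z τ) ^ 2) = 1 ∧
      -- geodesic equations of the conformal metric δ/‖x‖²
      (deriv (deriv X) τ
        - 2 * ((X τ * deriv X τ + Y τ * deriv Y τ + Z τ * deriv Z τ) /
            ((X τ) ^ 2 + (Y τ) ^ 2 + (Z τ) ^ 2)) * deriv X τ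
        + (((deriv X τ) ^ 2 + (deriv Y τ) ^ 2 + (deriv Z τ) ^ 2) /
            ((X τ) ^ 2 + (Y τ) ^ 2 + (Z τ) ^ 2)) * X τ = 0) ∧
      (deriv (deriv Y) τ
        - 2 * ((X τ * deriv X τ + Y τ * deriv Y τ + Z τ * deriv Z τ) /
            ((X τ) ^ 2 + (Y τ) ^ 2 + (Z τ) ^ 2)) * deriv Y τ
        + (((deriv X τ) ^ 2 + (deriv Y τ) ^ 2 + (deriv Z τ) ^ 2) /
            ((X τ) ^ 2 + (Y τ) ^ 2 + (Z τ) ^ 2)) * Y τ = 0) ∧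
      (deriv (deriv Z) τ
        - 2 * ((X τ * deriv X τ + Y τ * deriv Y τ + Z τ * deriv Z τ) /
            ((X τ) ^ 2 + (Y τ) ^ 2 + (Z τ) ^ 2)) * deriv Z τ
        + (((deriv X τ) ^ 2 + (deriv Y τ) ^ 2 + (deriv Z τ) ^ 2) /
            ((X τ) ^ 2 + (Y τ) ^ 2 + (Z τ) ^ 2)) * Z τ = 0) := by
  set s := sin v
  set c := cos v
  change X = re s c at hX
  change Y = fun τ => im s c τ * cos u at hY
  change Z = fun τ => im s c τ * sin u at hZ
  subst hX hY hZ
  intro τ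
  simp only [deriv_mul_const_field']
  have hu := cos_sq_add_sin_sq u
  have hsc : s ^ 2 + c ^ 2 = 1 := sin_sq_add_cos_sq v
  have hE : exp (τ * s) ^ 2 ≠ 0 := by positivity
  have hρ : re s c τ ^ 2 + (im s c τ * cos u) ^ 2 + (im s c τ * sin u) ^ 2
      = exp (τ * s) ^ 2 := by
    linear_combination re_sq_add_im_sq (s := s) (c := c) τ + im s c τ ^ 2 * hu
  have hdot : re s c τ * deriv (re s c) τ + im s c τ * cos u * (deriv (im s c) τ * cos u)
      + im s c τ * sin u * (deriv (im s c) τ * sin u) = s * exp (τ * s) ^ 2 := by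
    linear_combination re_mul_deriv_add_im_mul_deriv (s := s) (c := c) τ
      + im s c τ * deriv (im s c) τ * hu
  have hspeed : deriv (re s c) τ ^ 2 + (deriv (im s c) τ * cos u) ^ 2
      + (deriv (im s c) τ * sin u) ^ 2 = exp (τ * s) ^ 2 := by
    linear_combination deriv_re_sq_add_deriv_im_sq (s := s) (c := c) τ
      + deriv (im s c) τ ^ 2 * hu + exp (τ * s) ^ 2 * hsc
  rw [hρ, hdot, hspeed, div_self hE, mul_div_cancel_right₀ _ hE]
  refine ⟨rfl, ?_, ?_, ?_⟩
  · linear_combination deriv_deriv_re_sub_add τ - re s c τ * hsc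
  · linear_combination cos u * (deriv_deriv_im_sub_add τ - im s c τ * hsc)
  · linear_combination sin u * (deriv_deriv_im_sub_add τ - im s c τ * hsc)
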